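/- There exists a family {g_α : α ∈ A} of measurable functions from [0,1] to ℝ, indexed by a set A of cardinality continuum, such that for every n ≥ 1, every nonzero real polynomial P in n variables with zero constant term, and every choice of distinct indices α₁,…,α_n ∈ A, the function P(g_{α₁},…,g_{α_n}) is Lebesgue integrable on [0,1] and nowhere essentially bounded (in particular, it is not almost everywhere zero). Hence the set of nowhere essentially bounded integrable functions on [0,1] is strongly 𝔠-algebrable. -/

import Mathlib

open MeasureTheory Set

noncomputable section NEBaux

namespace NEBaux

open Filter ENNReal

/-- enumeration of the rationals -/
def q (k : ℕ) : ℝ := ((Denumerable.ofNat ℚ k : ℚ) : ℝ)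

lemma exists_q_mem {a b : ℝ} (h : a < b) : ∃ k, q k ∈ Set.Ioo a b := by
  obtain ⟨s, hr1, hr2⟩ := exists_rat_btwn h
  obtain ⟨k, hk⟩ : ∃ k, Denumerable.ofNat ℚ k = s := ⟨_, Denumerable.ofNat_encode s⟩
  exact ⟨k, by rw [q, hk]; exact ⟨hr1, hr2⟩⟩

/-- radii of the spike intervals -/
def r (k m : ℕ) : ℝ := (2:ℝ)⁻¹ ^ (k + (m+1)*(m+1))

lemma r_pos (k m : ℕ) : 0 < r k m := pow_pos (by norm_num) _

lemma r_antitone (k : ℕ) : ∀ {m m' : ℕ}, m ≤ m' → r k m' ≤ r k m := by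
  intro m m' h
  apply pow_le_pow_of_le_one (by norm_num) (by norm_num)
  have : (m+1)*(m+1) ≤ (m'+1)*(m'+1) := Nat.mul_le_mul (by omega) (by omega)
  omega

/-- the spike sets -/
def B (m : ℕ) : Set ℝ := ⋃ k, Set.Ioo (q k - r k m) (q k + r k m)

lemma B_antitone {m m' : ℕ} (h : m ≤ m') : B m' ⊆ B m := by
  apply Set.iUnion_mono
  intro k
  apply Set.Ioo_subset_Ioo <;> have := r_antitone k h <;> linarith

lemma B_measurable (m : ℕ) : MeasurableSet (B m) :=
  MeasurableSet.iUnion fun _ => measurableSet_Ioo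

lemma volume_B_le (m : ℕ) :
    volume (B m) ≤ ENNReal.ofReal (4 * (2:ℝ)⁻¹ ^ ((m+1)*(m+1))) := by
  refine le_trans (measure_iUnion_le _) ?_
  have h1 : ∀ k, volume (Set.Ioo (q k - r k m) (q k + r k m))
      = ENNReal.ofReal (2 * (2:ℝ)⁻¹ ^ ((m+1)*(m+1))) * ENNReal.ofReal ((2:ℝ)⁻¹ ^ k) := by
    intro k
    rw [Real.volume_Ioo, ← ENNReal.ofReal_mul (by positivity)]
    congr 1
    have hr : q k + r k m - (q k - r k m) = 2 * r k m := by ring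
    rw [hr, r, pow_add]
    ring
  simp only [h1]
  rw [ENNReal.tsum_mul_left]
  have h2 : ∑' k : ℕ, ENNReal.ofReal ((2:ℝ)⁻¹ ^ k) = 2 := by
    have h3 : ∀ k : ℕ, ENNReal.ofReal ((2:ℝ)⁻¹ ^ k) = (2:ℝ≥0∞)⁻¹ ^ k := by
      intro k
      rw [ENNReal.ofReal_pow (by norm_num)]
      congr 1
      rw [ENNReal.ofReal_inv_of_pos (by norm_num)]
      norm_num
    simp only [h3, ENNReal.tsum_geometric]
    rw [ENNReal.one_sub_inv_two]
    norm_num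
  rw [h2, show ((2:ℝ≥0∞)) = ENNReal.ofReal 2 by norm_num,
    ← ENNReal.ofReal_mul (by positivity)]
  apply ENNReal.ofReal_le_ofReal
  nlinarith [pow_pos (by norm_num : (0:ℝ) < 2⁻¹) ((m+1)*(m+1))]

/-- the "bad" null set of points in all spike sets -/
def U : Set ℝ := ⋂ m, B m

lemma volume_U : volume U = 0 := by
  have hle : ∀ m : ℕ, volume U ≤ ENNReal.ofReal (4 * (2:ℝ)⁻¹ ^ m) := by
    intro m
    refine le_trans (measure_mono (Set.iInter_subset _ m)) ((volume_B_le m).trans ?_)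
    apply ENNReal.ofReal_le_ofReal
    have : (2:ℝ)⁻¹ ^ ((m+1)*(m+1)) ≤ (2:ℝ)⁻¹ ^ m :=
      pow_le_pow_of_le_one (by norm_num) (by norm_num) (by nlinarith)
    linarith
  have htend : Tendsto (fun m : ℕ => ENNReal.ofReal (4 * (2:ℝ)⁻¹ ^ m)) atTop (nhds 0) := by
    have h4 : Tendsto (fun m : ℕ => 4 * (2:ℝ)⁻¹ ^ m) atTop (nhds 0) := by
      have := tendsto_pow_atTop_nhds_zero_of_lt_one (by norm_num : (0:ℝ) ≤ 2⁻¹) (by norm_num)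
      simpa using this.const_mul 4
    have h5 := (ENNReal.continuous_ofReal.tendsto 0).comp h4
    rw [ENNReal.ofReal_zero] at h5
    exact h5
  exact le_antisymm (ge_of_tendsto htend (Filter.Eventually.of_forall hle)) zero_le

/-- the spike-counting function -/
def N (x : ℝ) : ℕ := sSup {m | x ∈ B m}

/-- the basic nowhere essentially bounded function -/
def f (x : ℝ) : ℝ := N x

lemma f_nonneg (x : ℝ) : 0 ≤ f x := Nat.cast_nonneg _

lemma bddAbove_of_not_U {x : ℝ} (hx : x ∉ U) : BddAbove {m | x ∈ B m} := by
  obtain ⟨j, hj⟩ : ∃ j, x ∉ B j := by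
    by_contra h
    push_neg at h
    exact hx (Set.mem_iInter.2 h)
  refine ⟨j, fun m hm => ?_⟩
  by_contra h
  push_neg at h
  exact hj (B_antitone h.le hm)

lemma N_ge {x : ℝ} {m : ℕ} (hx : x ∈ B m) (hxU : x ∉ U) : m ≤ N x :=
  le_csSup (bddAbove_of_not_U hxU) hx

lemma N_mem {x : ℝ} (h : N x ≠ 0) : x ∈ B (N x) := by
  by_cases hb : BddAbove {m | x ∈ B m}
  · by_cases hne : {m | x ∈ B m}.Nonempty
    · exact Nat.sSup_mem hne hb
    · exfalso
      apply h
      rw [N, Set.not_nonempty_iff_eq_empty.1 hne]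
      exact csSup_empty
  · exfalso
    apply h
    rw [N, csSup_of_not_bddAbove hb]
    exact csSup_empty

lemma N_preimage (m : ℕ) : N ⁻¹' {m+1} = B (m+1) \ B (m+2) := by
  ext x
  simp only [Set.mem_preimage, Set.mem_singleton_iff, Set.mem_diff]
  constructor
  · intro h
    have h1 : x ∈ B (m+1) := by
      have := N_mem (x := x) (by rw [h]; exact Nat.succ_ne_zero m)
      rwa [h] at this
    refine ⟨h1, fun h2 => ?_⟩
    by_cases hb : BddAbove {j | x ∈ B j}
    · have := le_csSup hb h2
      rw [N] at h
      omega
    · have : N x = 0 := by rw [N, csSup_of_not_bddAbove hb]; exact csSup_empty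
      omega
  · rintro ⟨h1, h2⟩
    have hb : BddAbove {j | x ∈ B j} := by
      refine ⟨m+1, fun j hj => ?_⟩
      by_contra hc
      push_neg at hc
      exact h2 (B_antitone hc hj)
    refine le_antisymm (csSup_le ⟨m+1, h1⟩ ?_) (le_csSup hb h1)
    intro j hj
    by_contra hc
    push_neg at hc
    exact h2 (B_antitone hc hj)

lemma N_measurable : Measurable N := by
  apply measurable_to_countable'
  intro y
  match y with
  | 0 =>
    have : N ⁻¹' {0} = (⋃ m, N ⁻¹' {m+1})ᶜ := by
      ext x
      simp only [Set.mem_preimage, Set.mem_singleton_iff, Set.mem_compl_iff, Set.mem_iUnion]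
      constructor
      · intro h hc
        obtain ⟨m, hm⟩ := hc
        omega
      · intro h
        by_contra hc
        exact h ⟨N x - 1, by omega⟩
    rw [this]
    apply MeasurableSet.compl
    apply MeasurableSet.iUnion
    intro m
    rw [N_preimage]
    exact (B_measurable _).diff (B_measurable _)
  | (m+1) =>
    rw [N_preimage]
    exact (B_measurable _).diff (B_measurable _)

lemma f_measurable : Measurable f :=
  (Measurable.of_discrete (f := (Nat.cast : ℕ → ℝ))).comp N_measurable

lemma U_measurable : MeasurableSet U := MeasurableSet.iInter fun m => B_measurable m

/-- the spike lemma: on every subinterval, `f` exceeds `M` on a set of positive measure -/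
lemma spike (M : ℕ) {a b : ℝ} (hab : a < b) :
    ∃ S : Set ℝ, MeasurableSet S ∧ S ⊆ Set.Icc a b ∧ 0 < volume S ∧
      ∀ x ∈ S, (M:ℝ) ≤ f x := by
  obtain ⟨k, hk⟩ := exists_q_mem hab
  refine ⟨(B M ∩ Set.Ioo a b) \ U, ((B_measurable M).inter measurableSet_Ioo).diff U_measurable,
    fun x hx => Set.Ioo_subset_Icc_self hx.1.2, ?_, ?_⟩
  · rw [measure_diff_null volume_U]
    set c := max a (q k - r k M) with hc
    set d := min b (q k + r k M) with hd
    have hcd : c < d := by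
      have h1 := r_pos k M
      have h2 : c < q k := max_lt hk.1 (by linarith)
      have h3 : q k < d := lt_min hk.2 (by linarith)
      exact h2.trans h3
    have hsub : Set.Ioo c d ⊆ B M ∩ Set.Ioo a b := by
      intro x hx
      have h1 : x ∈ Set.Ioo (q k - r k M) (q k + r k M) :=
        ⟨lt_of_le_of_lt (le_max_right _ _) hx.1, lt_of_lt_of_le hx.2 (min_le_right _ _)⟩
      exact ⟨Set.mem_iUnion.2 ⟨k, h1⟩,
        ⟨lt_of_le_of_lt (le_max_left _ _) hx.1, lt_of_lt_of_le hx.2 (min_le_left _ _)⟩⟩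
    calc (0:ℝ≥0∞) < ENNReal.ofReal (d - c) := by
          rw [ENNReal.ofReal_pos]; linarith
      _ = volume (Set.Ioo c d) := (Real.volume_Ioo).symm
      _ ≤ _ := measure_mono hsub
  · rintro x ⟨⟨hxB, _⟩, hxU⟩
    have := N_ge hxB hxU
    exact_mod_cast Nat.cast_le.2 this

lemma summable_aux (gam : ℝ) :
    Summable (fun m : ℕ => ((m:ℝ)+1) ^ gam * (4 * (2:ℝ)⁻¹ ^ ((m+2)*(m+2)))) := by
  set K := ⌈gam⌉₊ with hK
  have hsum : Summable (fun m : ℕ => 4 * (((m+1:ℕ):ℝ) ^ K * (2:ℝ)⁻¹ ^ (m+1))) := by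
    have h0 : Summable (fun n : ℕ => (n:ℝ) ^ K * (2:ℝ)⁻¹ ^ n) := by
      have := summable_pow_mul_geometric_of_norm_lt_one (R := ℝ) K
        (r := (2:ℝ)⁻¹) (by rw [Real.norm_eq_abs, abs_lt]; constructor <;> norm_num)
      exact this
    exact (((summable_nat_add_iff 1).2 h0).mul_left 4)
  apply Summable.of_nonneg_of_le _ _ hsum
  · intro m
    positivity
  · intro m
    have hm1 : (1:ℝ) ≤ (m:ℝ) + 1 := by
      have : (0:ℝ) ≤ (m:ℝ) := Nat.cast_nonneg m
      linarith
    have h1 : ((m:ℝ)+1) ^ gam ≤ ((m:ℝ)+1) ^ (K:ℝ) :=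
      Real.rpow_le_rpow_of_exponent_le hm1 (Nat.le_ceil gam)
    have h1' : ((m:ℝ)+1) ^ gam ≤ ((m:ℝ)+1) ^ K := by
      rwa [Real.rpow_natCast] at h1
    have h2 : (2:ℝ)⁻¹ ^ ((m+2)*(m+2)) ≤ (2:ℝ)⁻¹ ^ (m+1) :=
      pow_le_pow_of_le_one (by norm_num) (by norm_num) (by nlinarith)
    have h3 : (0:ℝ) ≤ ((m:ℝ)+1) ^ gam := Real.rpow_nonneg (by linarith) _
    have h4 : (0:ℝ) < ((m:ℝ)+1) ^ K := by positivity
    have hcast : (((m+1:ℕ):ℝ)) = (m:ℝ) + 1 := by push_cast; ring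
    rw [hcast]
    calc ((m:ℝ)+1) ^ gam * (4 * (2:ℝ)⁻¹ ^ ((m+2)*(m+2)))
        ≤ ((m:ℝ)+1) ^ K * (4 * (2:ℝ)⁻¹ ^ (m+1)) := by
          apply mul_le_mul h1' (by nlinarith) (by positivity) (by positivity)
      _ = 4 * (((m:ℝ)+1) ^ K * (2:ℝ)⁻¹ ^ (m+1)) := by ring

lemma intOn_rpow {gam : ℝ} (hgam : 0 < gam) :
    IntegrableOn (fun x => f x ^ gam) (Set.Icc (0:ℝ) 1) := by
  constructor
  · exact ((Real.continuous_rpow_const hgam.le).measurable.comp f_measurable).aestronglyMeasurable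
  · rw [hasFiniteIntegral_iff_ofReal (Filter.Eventually.of_forall
      (fun x => Real.rpow_nonneg (f_nonneg x) gam))]
    set G : ℝ → ℝ≥0∞ := fun x => ∑' m : ℕ,
      Set.indicator (B (m+1)) (fun _ => ENNReal.ofReal (((m:ℝ)+1) ^ gam)) x with hG
    have hpt : ∀ x, ENNReal.ofReal (f x ^ gam) ≤ G x := by
      intro x
      cases hN : N x with
      | zero =>
        have : f x = 0 := by rw [f, hN]; norm_num
        rw [this, Real.zero_rpow hgam.ne']
        simp
      | succ m =>
        have hfx : f x = (m:ℝ) + 1 := by rw [f, hN]; push_cast; ring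
        have hxB : x ∈ B (m+1) := by
          have := N_mem (x := x) (by rw [hN]; exact Nat.succ_ne_zero m)
          rwa [hN] at this
        rw [hfx]
        calc ENNReal.ofReal (((m:ℝ)+1) ^ gam)
            = Set.indicator (B (m+1)) (fun _ => ENNReal.ofReal (((m:ℝ)+1) ^ gam)) x := by
              rw [Set.indicator_of_mem hxB]
          _ ≤ G x := ENNReal.le_tsum m
    calc ∫⁻ x in Set.Icc (0:ℝ) 1, ENNReal.ofReal (f x ^ gam)
        ≤ ∫⁻ x in Set.Icc (0:ℝ) 1, G x := lintegral_mono hpt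
      _ ≤ ∫⁻ x, G x := lintegral_mono' Measure.restrict_le_self le_rfl
      _ = ∑' m : ℕ, ENNReal.ofReal (((m:ℝ)+1) ^ gam) * volume (B (m+1)) := by
          rw [hG, lintegral_tsum (fun m =>
            ((measurable_const.indicator (B_measurable (m+1)))).aemeasurable)]
          congr 1
          funext m
          rw [lintegral_indicator (B_measurable (m+1)), setLIntegral_const]
      _ ≤ ∑' m : ℕ, ENNReal.ofReal (((m:ℝ)+1) ^ gam)
            * ENNReal.ofReal (4 * (2:ℝ)⁻¹ ^ ((m+2)*(m+2))) := by
          apply ENNReal.tsum_le_tsum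
          intro m
          exact mul_le_mul_right (by simpa using volume_B_le (m+1)) _
      _ = ∑' m : ℕ, ENNReal.ofReal (((m:ℝ)+1) ^ gam * (4 * (2:ℝ)⁻¹ ^ ((m+2)*(m+2)))) := by
          congr 1
          funext m
          rw [ENNReal.ofReal_mul (Real.rpow_nonneg (by positivity) _)]
      _ < ⊤ := by
          rw [← ENNReal.ofReal_tsum_of_nonneg (fun m => by positivity) (summable_aux gam)]
          exact ENNReal.ofReal_lt_top

lemma exists_beta : ∃ beta : ℝ → ℝ, (∀ t, 0 < beta t) ∧
    ∀ (n : ℕ) (α : Fin n → ℝ), Function.Injective α →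
      LinearIndependent ℚ (fun i => beta (α i)) := by
  let bb := Module.Basis.ofVectorSpace ℚ ℝ
  have hcard : Cardinal.mk ℝ ≤ Cardinal.mk (Module.Basis.ofVectorSpaceIndex ℚ ℝ) := by
    rw [bb.mk_eq_rank'', Real.rank_rat_real, Cardinal.mk_real]
  obtain ⟨e⟩ := (Cardinal.le_def _ _).1 hcard
  set w : Module.Basis.ofVectorSpaceIndex ℚ ℝ → ℚˣ :=
    fun i => if (bb i : ℝ) < 0 then -1 else 1 with hw
  have hind : LinearIndependent ℚ (fun i => w i • bb i) := bb.linearIndependent.units_smul w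
  have hpos : ∀ i, 0 < (w i • bb i : ℝ) := by
    intro i
    by_cases h : (bb i : ℝ) < 0
    · simp only [hw, if_pos h, Units.smul_def, Units.val_neg, Units.val_one,
        neg_smul, one_smul]
      linarith
    · have hne : bb i ≠ 0 := bb.ne_zero i
      have hgt : 0 < bb i := lt_of_le_of_ne (not_lt.1 h) (Ne.symm hne)
      simp only [hw, if_neg h, one_smul]
      exact hgt
  refine ⟨fun t => w (e t) • bb (e t), fun t => hpos _, ?_⟩
  intro n α hα
  exact hind.comp (fun i => e (α i)) (fun i j hij => hα (e.injective hij))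

lemma gamma_inj {n : ℕ} {β : Fin n → ℝ} (h : LinearIndependent ℚ β)
    (m m' : Fin n →₀ ℕ)
    (heq : ∑ i, (m i : ℝ) * β i = ∑ i, (m' i : ℝ) * β i) : m = m' := by
  have hz : ∑ i, ((m i : ℚ) - (m' i : ℚ)) • β i = 0 := by
    have hterm : ∀ i : Fin n, ((m i : ℚ) - (m' i : ℚ)) • β i
        = (m i : ℝ) * β i - (m' i : ℝ) * β i := by
      intro i
      rw [Rat.smul_def]
      push_cast
      ring
    rw [Finset.sum_congr rfl (fun i _ => hterm i), Finset.sum_sub_distrib, heq, sub_self]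
  have hcoeff := Fintype.linearIndependent_iff.1 h (fun i => (m i : ℚ) - (m' i : ℚ)) hz
  ext i
  have h2 : (m i : ℚ) - (m' i : ℚ) = 0 := hcoeff i
  have h3 : (m i : ℚ) = (m' i : ℚ) := by linarith
  exact_mod_cast h3

lemma prod_rpow_eq {y : ℝ} (hy : 0 ≤ y) {n : ℕ} {c : Fin n → ℝ} (hc : ∀ i, 0 < c i)
    {k : Fin n → ℕ} (hk : ∃ i, k i ≠ 0) :
    ∏ i, (y ^ c i) ^ (k i) = y ^ (∑ i, (k i : ℝ) * c i) := by
  have hsumpos : 0 < ∑ i, (k i : ℝ) * c i := by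
    obtain ⟨i₀, hi₀⟩ := hk
    refine Finset.sum_pos' (fun i _ => mul_nonneg (Nat.cast_nonneg _) (hc i).le)
      ⟨i₀, Finset.mem_univ _, ?_⟩
    have h1 : (1:ℝ) ≤ (k i₀ : ℝ) := by exact_mod_cast Nat.one_le_iff_ne_zero.2 hi₀
    nlinarith [hc i₀]
  rcases hy.eq_or_lt with h0 | hpos
  · rw [← h0]
    obtain ⟨i₀, hi₀⟩ := hk
    rw [Real.zero_rpow hsumpos.ne']
    apply Finset.prod_eq_zero (Finset.mem_univ i₀)
    rw [Real.zero_rpow (hc i₀).ne', zero_pow hi₀]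
  · calc ∏ i, (y ^ c i) ^ k i
        = ∏ i, Real.exp (Real.log y * ((k i : ℝ) * c i)) := Finset.prod_congr rfl (fun i _ => by
          rw [Real.rpow_def_of_pos hpos, ← Real.exp_nat_mul]
          ring_nf)
      _ = Real.exp (∑ i, Real.log y * ((k i : ℝ) * c i)) := (Real.exp_sum _ _).symm
      _ = Real.exp (Real.log y * ∑ i, (k i : ℝ) * c i) := by rw [← Finset.mul_sum]
      _ = y ^ (∑ i, (k i : ℝ) * c i) := (Real.rpow_def_of_pos hpos _).symm

end NEBaux

end NEBaux

open NEBaux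

/-- `f` is nowhere essentially bounded: on no subinterval `[a,b]` of `[0,1]`
is `|f|` bounded by a constant almost everywhere. -/
def NowhereEssBdd (f : ℝ → ℝ) : Prop :=
  ∀ a b : ℝ, 0 ≤ a → a < b → b ≤ 1 →
    ¬ ∃ C : ℝ, ∀ᵐ x ∂(MeasureTheory.volume.restrict (Set.Icc a b)), |f x| ≤ C

/-- The set of nowhere essentially bounded Lebesgue integrable functions on `[0,1]`
is strongly `𝔠`-algebrable: there is a family of measurable functions indexed by `ℝ`
(hence of cardinality continuum) such that every image of a nonzero polynomial with
zero constant term, applied to finitely many distinct members of the family, is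
integrable, nowhere essentially bounded, and in particular not a.e. zero. -/
theorem stmt3 :
    ∃ g : ℝ → ℝ → ℝ,
      (∀ α, Measurable (g α)) ∧
      ∀ (n : ℕ), 0 < n →
        ∀ P : MvPolynomial (Fin n) ℝ, P ≠ 0 → MvPolynomial.coeff 0 P = 0 →
          ∀ α : Fin n → ℝ, Function.Injective α →
            MeasureTheory.IntegrableOn
              (fun x => MvPolynomial.eval (fun i => g (α i) x) P) (Set.Icc 0 1) ∧
            NowhereEssBdd (fun x => MvPolynomial.eval (fun i => g (α i) x) P) ∧
            ¬ (∀ᵐ x ∂(MeasureTheory.volume.restrict (Set.Icc (0:ℝ) 1)),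
                MvPolynomial.eval (fun i => g (α i) x) P = 0) := by
  obtain ⟨beta, hbpos, hbind⟩ := exists_beta
  refine ⟨fun t x => f x ^ beta t, ?_, ?_⟩
  · intro t
    exact (Real.continuous_rpow_const (hbpos t).le).measurable.comp f_measurable
  intro n hn P hP hP0 α hα
  set s := P.support with hs
  set γ : (Fin n →₀ ℕ) → ℝ := fun m => ∑ i, (m i : ℝ) * beta (α i) with hγ
  have hind := hbind n α hα
  have hγinj : ∀ m m' : Fin n →₀ ℕ, γ m = γ m' → m = m' :=
    fun m m' h => gamma_inj hind m m' h
  have hmem_ne : ∀ m ∈ s, ∃ i, m i ≠ 0 := by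
    intro m hm
    by_contra h
    push_neg at h
    have hm0 : m = 0 := Finsupp.ext h
    rw [hm0] at hm
    exact (MvPolynomial.mem_support_iff.1 hm) hP0
  have hγpos : ∀ m ∈ s, 0 < γ m := by
    intro m hm
    obtain ⟨i₀, hi₀⟩ := hmem_ne m hm
    refine Finset.sum_pos' (fun i _ => mul_nonneg (Nat.cast_nonneg _) (hbpos _).le)
      ⟨i₀, Finset.mem_univ _, ?_⟩
    have h1 : (1:ℝ) ≤ (m i₀ : ℝ) := by exact_mod_cast Nat.one_le_iff_ne_zero.2 hi₀
    nlinarith [hbpos (α i₀)]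
  have hkey : ∀ x : ℝ, MvPolynomial.eval (fun i => f x ^ beta (α i)) P
      = ∑ m ∈ s, P.coeff m * f x ^ γ m := by
    intro x
    rw [MvPolynomial.eval_eq']
    apply Finset.sum_congr rfl
    intro m hm
    congr 1
    exact prod_rpow_eq (f_nonneg x) (fun i => hbpos (α i)) (hmem_ne m hm)
  -- the leading-term growth
  have hsne : s.Nonempty := by
    rw [Finset.nonempty_iff_ne_empty]
    intro hemp
    exact hP (MvPolynomial.support_eq_empty.1 (hs ▸ hemp))
  obtain ⟨mstar, hmstar, hmax⟩ := Finset.exists_max_image s γ hsne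
  have hcstar : P.coeff mstar ≠ 0 := MvPolynomial.mem_support_iff.1 hmstar
  set E : ℝ → ℝ := fun t => ∑ m ∈ s.erase mstar, P.coeff m * t ^ (γ m - γ mstar) with hE
  have hEtend : Filter.Tendsto E Filter.atTop (nhds 0) := by
    have h0 : (0:ℝ) = ∑ m ∈ s.erase mstar, (0:ℝ) := by simp
    rw [hE, h0]
    apply tendsto_finset_sum
    intro m hm
    have hlt : γ m < γ mstar :=
      lt_of_le_of_ne (hmax m (Finset.mem_of_mem_erase hm))
        (fun h => (Finset.ne_of_mem_erase hm) (hγinj _ _ h))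
    have h2 := tendsto_rpow_neg_atTop (by linarith : (0:ℝ) < γ mstar - γ m)
    simpa [neg_sub] using h2.const_mul (P.coeff m)
  have habs : Filter.Tendsto (fun t => |P.coeff mstar + E t|) Filter.atTop
      (nhds |P.coeff mstar|) := by
    have h3 := hEtend.const_add (P.coeff mstar)
    simpa using h3.abs
  have hFp : Filter.Tendsto (fun t => |∑ m ∈ s, P.coeff m * t ^ γ m|)
      Filter.atTop Filter.atTop := by
    have hmul : Filter.Tendsto (fun t => t ^ γ mstar * |P.coeff mstar + E t|)
        Filter.atTop Filter.atTop :=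
      (tendsto_rpow_atTop (hγpos mstar hmstar)).atTop_mul_pos (abs_pos.2 hcstar) habs
    apply hmul.congr'
    filter_upwards [Filter.eventually_ge_atTop (1:ℝ)] with t ht
    have htpos : (0:ℝ) < t := lt_of_lt_of_le one_pos ht
    have hterm : ∀ m ∈ s.erase mstar,
        t ^ γ mstar * (P.coeff m * t ^ (γ m - γ mstar)) = P.coeff m * t ^ γ m := by
      intro m hm
      have h4 : t ^ γ mstar * (P.coeff m * t ^ (γ m - γ mstar))
          = P.coeff m * (t ^ γ mstar * t ^ (γ m - γ mstar)) := by ring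
      rw [h4, ← Real.rpow_add htpos]
      congr 1
      ring
    have hsplit : t ^ γ mstar * (P.coeff mstar + E t) = ∑ m ∈ s, P.coeff m * t ^ γ m := by
      calc t ^ γ mstar * (P.coeff mstar + E t)
          = P.coeff mstar * t ^ γ mstar
            + ∑ m ∈ s.erase mstar, t ^ γ mstar * (P.coeff m * t ^ (γ m - γ mstar)) := by
            rw [hE, mul_add, Finset.mul_sum, mul_comm (t ^ γ mstar) (P.coeff mstar)]
        _ = P.coeff mstar * t ^ γ mstar + ∑ m ∈ s.erase mstar, P.coeff m * t ^ γ m := by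
            rw [Finset.sum_congr rfl hterm]
        _ = ∑ m ∈ s, P.coeff m * t ^ γ m := Finset.add_sum_erase s (fun m => P.coeff m * t ^ γ m) hmstar
    rw [← hsplit, abs_mul, abs_of_nonneg (Real.rpow_nonneg (le_of_lt htpos) _)]
  -- nowhere essential boundedness
  have hNEB : NowhereEssBdd (fun x => MvPolynomial.eval (fun i => f x ^ beta (α i)) P) := by
    intro a b ha hab hb
    rintro ⟨C, hC⟩
    simp only [hkey] at hC
    obtain ⟨T, hT⟩ := Filter.eventually_atTop.1 (hFp.eventually_gt_atTop C)
    obtain ⟨M, hM⟩ := exists_nat_ge T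
    obtain ⟨S, hSmeas, hSsub, hSpos, hSf⟩ := spike M hab
    have hbad : S ⊆ {x | ¬ |∑ m ∈ s, P.coeff m * f x ^ γ m| ≤ C} := by
      intro x hx
      have h1 : T ≤ f x := le_trans hM (hSf x hx)
      exact not_le.2 (hT (f x) h1)
    have hz : volume.restrict (Set.Icc a b) S = 0 :=
      measure_mono_null hbad (MeasureTheory.ae_iff.1 hC)
    rw [MeasureTheory.Measure.restrict_apply hSmeas,
      Set.inter_eq_self_of_subset_left hSsub] at hz
    exact absurd hz (ne_of_gt hSpos)
  refine ⟨?_, hNEB, ?_⟩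
  · have hInt : MeasureTheory.IntegrableOn
        (fun x => ∑ m ∈ s, P.coeff m * f x ^ γ m) (Set.Icc (0:ℝ) 1) := by
      apply MeasureTheory.integrable_finset_sum
      intro m hm
      exact (intOn_rpow (hγpos m hm)).const_mul (P.coeff m)
    exact hInt.congr_fun (fun x _ => (hkey x).symm) measurableSet_Icc
  · intro hae
    refine hNEB 0 1 le_rfl one_pos le_rfl ⟨0, ?_⟩
    filter_upwards [hae] with x hx
    rw [hx]
    simp
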